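/- For self-adjoint matrices A and B of the same size, the sum of their decreasingly ordered eigenvalue vectors majorizes the decreasingly ordered eigenvalue vector of A + B (Ky Fan's theorem): for every k, the sum of the k largest eigenvalues of A + B is at most the sum of the k largest eigenvalues of A plus the sum of the k largest eigenvalues of B, with equality of total traces. -/

import Mathlib

/-! Ky Fan's maximum principle: if `A` has orthonormal eigenvectors `e j` with eigenvalues `λ j`
and `v₁, …, v_k` is an orthonormal family, then `∑ i, re ⟪v i, A v i⟫ = ∑ j, λ j * t j` with
`t j = ∑ i, ‖⟪e j, v i⟫‖²`. By Bessel `t j ≤ 1` and by Parseval `∑ j, t j = k`, so the sum is at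
most that of the `k` largest eigenvalues. Taking for `v` the top `k` eigenvectors of `A + B`, the
left side for `A + B` is the sum of its `k` largest eigenvalues and splits as the sum of the
corresponding quantities for `A` and `B`. The totals agree because the trace is additive. -/

open Matrix Finset in
/-- `u` rearranged in decreasing order. -/
noncomputable def sortDesc {n : ℕ} (u : Fin n → ℝ) : Fin n → ℝ :=
  fun i => u (Tuple.sort u i.rev)

open Finset in
/-- `u` majorizes `v`: every partial sum of the decreasing rearrangement of `u`
dominates that of `v`, and the total sums agree. -/
noncomputable def Majorizes {n : ℕ} (u v : Fin n → ℝ) : Prop :=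
  (∀ k : ℕ, ∑ i ∈ Finset.univ.filter (fun i : Fin n => (i : ℕ) < k), sortDesc v i ≤
      ∑ i ∈ Finset.univ.filter (fun i : Fin n => (i : ℕ) < k), sortDesc u i) ∧
  ∑ i, u i = ∑ i, v i

open Finset RCLike

theorem sum_mul_le_sum_of_threshold {ι : Type*} [Fintype ι] {s : Finset ι} {w t : ι → ℝ}
    {c : ℝ} (hw_mem : ∀ i ∈ s, c ≤ w i) (hw_not_mem : ∀ i ∉ s, w i ≤ c)
    (ht₀ : ∀ i, 0 ≤ t i) (ht₁ : ∀ i, t i ≤ 1) (ht : ∑ i, t i = #s) :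
    ∑ i, w i * t i ≤ ∑ i ∈ s, w i := by
  classical
  have key : ∑ i, (w i - c) * (t i - if i ∈ s then 1 else 0) ≤ 0 := by
    refine sum_nonpos fun i _ => ?_
    by_cases hi : i ∈ s
    · simp only [hi, if_true]
      exact mul_nonpos_of_nonneg_of_nonpos (by linarith [hw_mem i hi]) (by linarith [ht₁ i])
    · simp only [hi, if_false, sub_zero]
      exact mul_nonpos_of_nonpos_of_nonneg (by linarith [hw_not_mem i hi]) (ht₀ i)
  simp only [mul_sub, sub_mul, mul_ite, mul_one, mul_zero, sum_sub_distrib, ← mul_sum,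
    sum_ite_mem, univ_inter, ht, sum_const, nsmul_eq_mul] at key
  linarith

section sortDesc

variable {n : ℕ}

theorem antitone_sortDesc (u : Fin n → ℝ) : Antitone (sortDesc u) :=
  fun _ _ hij => Tuple.monotone_sort u (Fin.rev_le_rev.2 hij)

theorem sortDesc_of_antitone {u : Fin n → ℝ} (hu : Antitone u) : sortDesc u = u := by
  have h := (Tuple.comp_sort_eq_comp_iff_monotone (σ := Fin.revPerm)).2 fun i j hij =>
    hu (Fin.rev_le_rev.2 hij)
  funext i
  simpa [sortDesc] using congrFun h.symm i.rev

theorem sum_sortDesc (u : Fin n → ℝ) : ∑ i, sortDesc u i = ∑ i, u i :=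
  Equiv.sum_comp (Fin.revPerm.trans (Tuple.sort u)) u

theorem sum_mul_le_sum_sortDesc {k : ℕ} (u : Fin n → ℝ) {t : Fin n → ℝ}
    (ht₀ : ∀ i, 0 ≤ t i) (ht₁ : ∀ i, t i ≤ 1) (ht : ∑ i, t i = #{i : Fin n | (i : ℕ) < k}) :
    ∑ i, u i * t i ≤ ∑ i ∈ {i : Fin n | (i : ℕ) < k}, sortDesc u i := by
  obtain rfl | hn := Nat.eq_zero_or_pos n
  · simp
  set σ := Fin.revPerm.trans (Tuple.sort u)
  rw [← Equiv.sum_comp σ]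
  refine sum_mul_le_sum_of_threshold (w := sortDesc u)
    (c := sortDesc u ⟨min (k - 1) (n - 1), by omega⟩) (fun i hi => ?_) (fun i hi => ?_)
    (fun i => ht₀ _) (fun i => ht₁ _) (by rwa [Equiv.sum_comp σ t])
  · simp only [mem_filter, mem_univ, true_and] at hi
    exact antitone_sortDesc u (Fin.le_def.2 (by simp; omega))
  · simp only [mem_filter, mem_univ, true_and, not_lt] at hi
    exact antitone_sortDesc u (Fin.le_def.2 (by simp; omega))

end sortDesc

section InnerProductSpace

variable {𝕜 E : Type*} [RCLike 𝕜] [NormedAddCommGroup E] [InnerProductSpace 𝕜 E]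

theorem OrthonormalBasis.re_inner_map_self_eq_sum {ι : Type*} [Fintype ι]
    (b : OrthonormalBasis ι 𝕜 E) {T : E →ₗ[𝕜] E} {μ : ι → ℝ}
    (hT : ∀ j, T (b j) = (μ j : 𝕜) • b j) (x : E) :
    re (inner 𝕜 x (T x)) = ∑ j, μ j * ‖inner 𝕜 (b j) x‖ ^ 2 := by
  nth_rw 2 [← b.sum_repr' x]
  simp only [map_sum, map_smul, hT, inner_sum, inner_smul_right, ← inner_conj_symm x (b _),
    map_sum]
  refine sum_congr rfl fun j _ => ?_
  rw [mul_left_comm, mul_conj, ← ofReal_pow, ← ofReal_mul, ofReal_re]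

theorem OrthonormalBasis.sum_re_inner_map_le_sum_sortDesc {n k : ℕ}
    (b : OrthonormalBasis (Fin n) 𝕜 E) {T : E →ₗ[𝕜] E} {μ : Fin n → ℝ}
    (hT : ∀ j, T (b j) = (μ j : 𝕜) • b j) {ι : Type*} {v : ι → E} (hv : Orthonormal 𝕜 v)
    {s : Finset ι} (hs : #s = #{i : Fin n | (i : ℕ) < k}) :
    ∑ i ∈ s, re (inner 𝕜 (v i) (T (v i))) ≤ ∑ i ∈ {i : Fin n | (i : ℕ) < k}, sortDesc μ i := by
  set t : Fin n → ℝ := fun j => ∑ i ∈ s, ‖inner 𝕜 (b j) (v i)‖ ^ 2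
  have ht₁ : ∀ j, t j ≤ 1 := fun j => by
    have bessel := hv.sum_inner_products_le (b j) (s := s)
    rw [b.orthonormal.1 j, one_pow] at bessel
    simpa only [t, norm_inner_symm (b j)] using bessel
  have ht : ∑ j, t j = #s := by
    simp only [t, sum_comm (γ := Fin n), b.sum_sq_norm_inner_right, hv.1, one_pow, sum_const,
      nsmul_one]
  calc ∑ i ∈ s, re (inner 𝕜 (v i) (T (v i)))
      = ∑ j, μ j * t j := by
        simp only [b.re_inner_map_self_eq_sum hT, t, mul_sum]
        exact sum_comm
    _ ≤ _ := sum_mul_le_sum_sortDesc μ (fun j => sum_nonneg fun _ _ => by positivity) ht₁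
        (ht.trans (by rw [hs]))

end InnerProductSpace

namespace Matrix.IsHermitian

variable {𝕜 m : Type*} [RCLike 𝕜] [Fintype m] [DecidableEq m] {A : Matrix m m 𝕜}

theorem toLpLin_eigenvectorBasis (hA : A.IsHermitian) (j : m) :
    toLpLin 2 2 A (hA.eigenvectorBasis j) = (hA.eigenvalues j : 𝕜) • hA.eigenvectorBasis j := by
  rw [toLpLin_apply, hA.mulVec_eigenvectorBasis, ← RCLike.real_smul_eq_coe_smul (K := 𝕜)]
  rfl

theorem re_inner_toLpLin_eigenvectorBasis (hA : A.IsHermitian) (j : m) :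
    re (inner 𝕜 (hA.eigenvectorBasis j) (toLpLin 2 2 A (hA.eigenvectorBasis j))) =
      hA.eigenvalues j := by
  rw [toLpLin_eigenvectorBasis, inner_smul_right, inner_self_eq_norm_sq_to_K,
    hA.eigenvectorBasis.orthonormal.1 j]
  simp

end Matrix.IsHermitian

open Matrix in
/-- Ky Fan: for Hermitian matrices `A`, `B`, the (componentwise) sum of the decreasingly
ordered eigenvalue vectors of `A` and `B` majorizes the eigenvalue vector of `A + B`. -/
theorem kyFan_eigenvalue_sum_majorizes {n : ℕ} (A B : Matrix (Fin n) (Fin n) ℂ)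
    (hA : A.IsHermitian) (hB : B.IsHermitian) :
    Majorizes (fun i => sortDesc hA.eigenvalues i + sortDesc hB.eigenvalues i)
      ((hA.add hB).eigenvalues) := by
  set hM := hA.add hB
  refine ⟨fun k => ?_, ?_⟩
  · -- `sortDesc hM.eigenvalues = hM.eigenvalues ∘ σ` holds by definition
    set σ := Fin.revPerm.trans (Tuple.sort hM.eigenvalues)
    set v := hM.eigenvectorBasis ∘ σ
    have hv : Orthonormal ℂ v := hM.eigenvectorBasis.orthonormal.comp _ σ.injective
    rw [sortDesc_of_antitone ((antitone_sortDesc _).add (antitone_sortDesc _)), sum_add_distrib]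
    calc ∑ i ∈ {i : Fin n | (i : ℕ) < k}, sortDesc hM.eigenvalues i
        = ∑ i ∈ {i : Fin n | (i : ℕ) < k}, re (inner ℂ (v i) (toLpLin 2 2 (A + B) (v i))) :=
          sum_congr rfl fun i _ => (hM.re_inner_toLpLin_eigenvectorBasis (σ i)).symm
      _ = ∑ i ∈ {i : Fin n | (i : ℕ) < k}, re (inner ℂ (v i) (toLpLin 2 2 A (v i))) +
            ∑ i ∈ {i : Fin n | (i : ℕ) < k}, re (inner ℂ (v i) (toLpLin 2 2 B (v i))) := by
          simp only [map_add, LinearMap.add_apply, inner_add_right, sum_add_distrib]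
      _ ≤ _ := add_le_add
          (hA.eigenvectorBasis.sum_re_inner_map_le_sum_sortDesc hA.toLpLin_eigenvectorBasis hv rfl)
          (hB.eigenvectorBasis.sum_re_inner_map_le_sum_sortDesc hB.toLpLin_eigenvectorBasis hv rfl)
  · have htrace := trace_add A B
    rw [hA.trace_eq_sum_eigenvalues, hB.trace_eq_sum_eigenvalues,
      hM.trace_eq_sum_eigenvalues] at htrace
    rw [sum_add_distrib, sum_sortDesc, sum_sortDesc]
    exact_mod_cast htrace.symm
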